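/- arXiv:2005.09244 — 7 statements merged into one kernel-verified Lean document; each statement's English description precedes it below -/
import Mathlib

section
/- For every n ≥ 1 and every balance vector p : Fin n → ℤ with ∑ i, p i = 0, there exists a list L of transactions that settles p with L.length ≤ n − 1. -/
/-!
Fix a participant `c` and let every other participant `k` settle directly with `c`: `k` pays
`p k` to `c` if `p k > 0`, receives `-p k` from `c` if `p k < 0`, and does nothing otherwise.
This uses at most one transaction per `k ≠ c` and balances every `k ≠ c`; the balance of `c`
comes out right as well, because the balances sum to zero.
-/

/-- A transaction `(i, j, a)`: participant `i` pays amount `a` to participant `j`. -/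
abbrev Txn (m : ℕ) := Fin m × Fin m × ℤ

/-- All transactions in the list are valid: distinct sender/receiver, positive amount. -/
def ValidTxns {m : ℕ} (L : List (Txn m)) : Prop :=
  ∀ t ∈ L, t.1 ≠ t.2.1 ∧ 0 < t.2.2

/-- `L` settles the balance vector `p`: for every participant `k`, the total amount sent
by `k` minus the total amount received by `k` equals `p k`. -/
def Settles {m : ℕ} (L : List (Txn m)) (p : Fin m → ℤ) : Prop :=
  ∀ k : Fin m,
    ((L.filter (fun t => t.1 = k)).map (fun t => t.2.2)).sum
      - ((L.filter (fun t => t.2.1 = k)).map (fun t => t.2.2)).sum = p k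

namespace Txn

variable {m : ℕ}

def netOutflow (L : List (Txn m)) (k : Fin m) : ℤ :=
  ((L.filter (fun t => t.1 = k)).map (fun t => t.2.2)).sum
    - ((L.filter (fun t => t.2.1 = k)).map (fun t => t.2.2)).sum

theorem settles_iff_netOutflow_eq {L : List (Txn m)} {p : Fin m → ℤ} :
    Settles L p ↔ netOutflow L = p :=
  funext_iff.symm

@[simp]
theorem netOutflow_nil : netOutflow ([] : List (Txn m)) = 0 := by
  funext k
  simp [netOutflow]

theorem netOutflow_cons (t : Txn m) (L : List (Txn m)) :
    netOutflow (t :: L) = Pi.single t.1 t.2.2 - Pi.single t.2.1 t.2.2 + netOutflow L := by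
  funext k
  by_cases h₁ : t.1 = k <;> by_cases h₂ : t.2.1 = k <;>
    simp [netOutflow, eq_comm (a := k), h₁, h₂] <;> ring

@[simp]
theorem netOutflow_append (L₁ L₂ : List (Txn m)) :
    netOutflow (L₁ ++ L₂) = netOutflow L₁ + netOutflow L₂ := by
  induction L₁ with
  | nil => simp
  | cons t L ih => rw [List.cons_append, netOutflow_cons, netOutflow_cons, ih, add_assoc]

theorem netOutflow_flatMap {ι : Type*} (l : List ι) (f : ι → List (Txn m)) :
    netOutflow (l.flatMap f) = (l.map fun i => netOutflow (f i)).sum := by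
  induction l with
  | nil => simp
  | cons i l ih => simp [ih]

def transfer (i j : Fin m) (a : ℤ) : List (Txn m) :=
  if 0 < a then [(i, j, a)] else if a < 0 then [(j, i, -a)] else []

theorem length_transfer_le (i j : Fin m) (a : ℤ) : (transfer i j a).length ≤ 1 := by
  unfold transfer
  split_ifs <;> simp

theorem validTxns_transfer {i j : Fin m} (hij : i ≠ j) (a : ℤ) :
    ValidTxns (transfer i j a) := by
  unfold transfer ValidTxns
  split_ifs <;> simp [*, hij.symm]

theorem netOutflow_transfer (i j : Fin m) (a : ℤ) :
    netOutflow (transfer i j a) = Pi.single i a - Pi.single j a := by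
  unfold transfer
  split_ifs with hpos hneg
  · simp [netOutflow_cons]
  · simp [netOutflow_cons, Pi.single_neg]; abel
  · obtain rfl : a = 0 := by omega
    simp

noncomputable def starSettlement (c : Fin m) (p : Fin m → ℤ) : List (Txn m) :=
  (Finset.univ.erase c).toList.flatMap fun k => transfer k c (p k)

theorem validTxns_starSettlement (c : Fin m) (p : Fin m → ℤ) :
    ValidTxns (starSettlement c p) := by
  intro t ht
  obtain ⟨k, hk, ht⟩ := List.mem_flatMap.mp ht
  exact validTxns_transfer (Finset.ne_of_mem_erase (Finset.mem_toList.mp hk)) _ t ht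

theorem length_starSettlement_le (c : Fin m) (p : Fin m → ℤ) :
    (starSettlement c p).length ≤ m - 1 := by
  calc (starSettlement c p).length
      = ((Finset.univ.erase c).toList.map fun k => (transfer k c (p k)).length).sum :=
        List.length_flatMap ..
    _ ≤ ((Finset.univ.erase c).toList.map fun _ => 1).sum :=
        List.sum_le_sum fun k _ => length_transfer_le k c (p k)
    _ = m - 1 := by simp [Finset.card_erase_of_mem]

theorem settles_starSettlement (c : Fin m) {p : Fin m → ℤ} (hp : ∑ i, p i = 0) :
    Settles (starSettlement c p) p := by
  have hc : ∑ k, (Pi.single c (p k) : Fin m → ℤ) = 0 := by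
    simpa [hp] using (map_sum (AddMonoidHom.single (fun _ => ℤ) c) p .univ).symm
  rw [settles_iff_netOutflow_eq, starSettlement, netOutflow_flatMap]
  simp only [netOutflow_transfer, Finset.sum_map_toList, Finset.sum_sub_distrib,
    Finset.sum_erase_eq_sub (Finset.mem_univ c), Finset.univ_sum_single, hc]
  abel

end Txn

/-- the greedy upper bound. For every `n ≥ 1` and every balance vector
`p : Fin n → ℤ` summing to zero, there is a list of transactions settling `p`
of length at most `n - 1`. -/
theorem greedy_upper_bound (n : ℕ) (hn : 1 ≤ n) (p : Fin n → ℤ)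
    (hsum : ∑ i, p i = 0) :
    ∃ L : List (Txn n), ValidTxns L ∧ Settles L p ∧ L.length ≤ n - 1 := by
  let c : Fin n := ⟨0, hn⟩
  exact ⟨Txn.starSettlement c p, Txn.validTxns_starSettlement c p,
    Txn.settles_starSettlement c hsum, Txn.length_starSettlement_le c p⟩
end

section
/- Let p : Fin n → ℤ with ∑ i, p i = 0 and suppose p is not identically zero. Then there exist indices i ≠ j with p i > 0 and p j < 0 such that, setting a = min (p i) (−p j) (so a > 0), the updated balance vector p' defined by p' i = p i − a, p' j = p j + a, and p' k = p k for k ∉ {i, j}, satisfies ∑ k, p' k = 0 and the set {k | p' k ≠ 0} is strictly contained in {k | p k ≠ 0}. -/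
/-!
A nonzero integer vector with zero sum has a positive entry `p i` and a negative entry `p j`.
Moving `min (p i) (-p j)` from `i` to `j` preserves the sum, touches only two entries of the
support, and zeroes whichever of `p i`, `-p j` is the smaller.
-/

open Function

section Transfer

variable {ι M : Type*} [DecidableEq ι]

def transfer [AddGroup M] (f : ι → M) (i j : ι) (a : M) : ι → M :=
  update (update f i (f i - a)) j (f j + a)

section AddGroup

variable [AddGroup M] {f : ι → M} {i j : ι} {a : M}

theorem transfer_apply_left (hij : i ≠ j) : transfer f i j a i = f i - a := by
  simp [transfer, hij]

theorem transfer_apply_right : transfer f i j a j = f j + a := by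
  simp [transfer]

theorem transfer_apply_of_ne {k : ι} (hki : k ≠ i) (hkj : k ≠ j) :
    transfer f i j a k = f k := by
  simp [transfer, hki, hkj]

theorem support_transfer_subset (hi : f i ≠ 0) (hj : f j ≠ 0) :
    support (transfer f i j a) ⊆ support f := by
  intro k hk
  by_cases hki : k = i
  · exact hki ▸ hi
  by_cases hkj : k = j
  · exact hkj ▸ hj
  rwa [mem_support, transfer_apply_of_ne hki hkj] at hk

variable [LinearOrder M]

theorem transfer_min_apply_left_eq_zero_or_right_eq_zero (hij : i ≠ j) :
    transfer f i j (min (f i) (-f j)) i = 0 ∨ transfer f i j (min (f i) (-f j)) j = 0 := by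
  rw [transfer_apply_left hij, transfer_apply_right]
  rcases min_choice (f i) (-f j) with h | h <;> rw [h] <;> simp

theorem support_transfer_min_ssubset (hi : 0 < f i) (hj : f j < 0) :
    support (transfer f i j (min (f i) (-f j))) ⊂ support f := by
  have hij : i ≠ j := by
    rintro rfl
    exact lt_asymm hi hj
  refine (Set.ssubset_iff_of_subset (support_transfer_subset hi.ne' hj.ne)).2 ?_
  rcases transfer_min_apply_left_eq_zero_or_right_eq_zero (f := f) hij with h | h
  · exact ⟨i, hi.ne', not_not.2 h⟩
  · exact ⟨j, hj.ne, not_not.2 h⟩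

end AddGroup

theorem sum_transfer [AddCommGroup M] [Fintype ι] (f : ι → M) {i j : ι} (hij : i ≠ j)
    (a : M) :
    ∑ k, transfer f i j a k = ∑ k, f k := by
  have h_eq : transfer f i j a = f - Pi.single i a + Pi.single j a := by
    funext k
    by_cases hki : k = i
    · subst hki; simp [transfer_apply_left hij, hij]
    by_cases hkj : k = j
    · subst hkj; simp [transfer_apply_right, hki]
    simp [transfer_apply_of_ne hki hkj, hki, hkj]
  simp [h_eq, Finset.sum_add_distrib, Finset.sum_sub_distrib]

end Transfer

theorem exists_pos_and_exists_neg_of_sum_eq_zero {ι M : Type*} [Fintype ι] [AddCommGroup M]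
    [LinearOrder M] [IsOrderedAddMonoid M] {f : ι → M} (hsum : ∑ k, f k = 0)
    (hne : ∃ k, f k ≠ 0) :
    (∃ i, 0 < f i) ∧ ∃ j, f j < 0 := by
  obtain ⟨k, hk⟩ := hne
  obtain ⟨i, -, hi⟩ :=
    Finset.exists_pos_of_sum_zero_of_exists_nonzero f hsum ⟨k, Finset.mem_univ k, hk⟩
  obtain ⟨j, -, hj⟩ := Finset.exists_pos_of_sum_zero_of_exists_nonzero (-f)
    (by simp [Finset.sum_neg_distrib, hsum]) ⟨k, Finset.mem_univ k, neg_ne_zero.2 hk⟩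
  exact ⟨⟨i, hi⟩, j, neg_pos.1 hj⟩

/-- the induction step of the greedy settlement algorithm.  If
`p : Fin n → ℤ` sums to zero and is not identically zero, then there are `i ≠ j`
with `p i > 0` and `p j < 0` such that, for `a = min (p i) (-p j)`, we have `a > 0`
and the updated vector (decrease `p i` by `a`, increase `p j` by `a`) still sums to
zero and has a strictly smaller support. -/
theorem greedy_step (n : ℕ) (p : Fin n → ℤ) (hsum : ∑ i, p i = 0)
    (hne : ∃ k, p k ≠ 0) :
    ∃ i j : Fin n, i ≠ j ∧ 0 < p i ∧ p j < 0 ∧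
      0 < min (p i) (-p j) ∧
      (∑ k, Function.update (Function.update p i (p i - min (p i) (-p j))) j
          (p j + min (p i) (-p j)) k = 0) ∧
      {k | Function.update (Function.update p i (p i - min (p i) (-p j))) j
          (p j + min (p i) (-p j)) k ≠ 0} ⊂ {k | p k ≠ 0} := by
  obtain ⟨⟨i, hi⟩, j, hj⟩ := exists_pos_and_exists_neg_of_sum_eq_zero hsum hne
  have hij : i ≠ j := by rintro rfl; omega
  exact ⟨i, j, hij, hi, hj, lt_min hi (neg_pos.2 hj), (sum_transfer p hij _).trans hsum,
    support_transfer_min_ssubset hi hj⟩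
end

section
/- Let p : Fin n → ℤ with ∑ i, p i = 0 and let L be a list of transactions that settles p. If S ⊆ Fin n is a set of participants such that every transaction (i, j, a) in L has either both i ∈ S and j ∈ S, or both i ∉ S and j ∉ S (no transaction crosses between S and its complement), then ∑ i ∈ S, p i = 0. -/
/-!
Summing the settlement equations over `S` counts each transaction once for its sender and
once, with the opposite sign, for its receiver, so `∑ i ∈ S, p i` is the total paid by members
of `S` minus the total received by members of `S`. When no transaction crosses the boundary of
`S`, both totals run over the same transactions and cancel.
-/

theorem List.sum_fiberwise_eq_sum_filter_mem {α β M : Type*} [DecidableEq β] [AddCommMonoid M]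
    (L : List α) (f : α → β) (w : α → M) (S : Finset β) :
    ∑ k ∈ S, ((L.filter (fun t => f t = k)).map w).sum =
      ((L.filter (fun t => f t ∈ S)).map w).sum := by
  induction L with
  | nil => simp
  | cons a L ih =>
    have head_split (P : Prop) [Decidable P] (l : List α) :
        ((if P then a :: l else l).map w).sum = (if P then w a else 0) + (l.map w).sum := by
      split_ifs <;> simp
    simp only [List.filter_cons, decide_eq_true_eq, head_split, Finset.sum_add_distrib,
      Finset.sum_ite_eq, ih]

theorem Settles.sum_eq {m : ℕ} {L : List (Txn m)} {p : Fin m → ℤ} (h : Settles L p)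
    (S : Finset (Fin m)) :
    ∑ i ∈ S, p i = ((L.filter (fun t => t.1 ∈ S)).map (fun t => t.2.2)).sum
      - ((L.filter (fun t => t.2.1 ∈ S)).map (fun t => t.2.2)).sum := by
  rw [← Finset.sum_congr rfl fun k _ => h k, Finset.sum_sub_distrib,
    List.sum_fiberwise_eq_sum_filter_mem, List.sum_fiberwise_eq_sum_filter_mem]

theorem no_cross_subset_balanced_general (n : ℕ) (p : Fin n → ℤ)
    (L : List (Txn n)) (hsettle : Settles L p)
    (S : Finset (Fin n))
    (hcross : ∀ t ∈ L, (t.1 ∈ S ∧ t.2.1 ∈ S) ∨ (t.1 ∉ S ∧ t.2.1 ∉ S)) :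
    ∑ i ∈ S, p i = 0 := by
  have same_filter : L.filter (fun t => t.1 ∈ S) = L.filter (fun t => t.2.1 ∈ S) :=
    List.filter_congr fun t ht => by
      rcases hcross t ht with ⟨h₁, h₂⟩ | ⟨h₁, h₂⟩ <;> simp [h₁, h₂]
  rw [hsettle.sum_eq, same_filter, sub_self]

/-- if no transaction of a settling list crosses between `S` and its
complement, then the balances within `S` sum to zero. -/
theorem no_cross_subset_balanced (n : ℕ) (p : Fin n → ℤ) (hsum : ∑ i, p i = 0)
    (L : List (Txn n)) (hvalid : ValidTxns L) (hsettle : Settles L p)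
    (S : Finset (Fin n))
    (hcross : ∀ t ∈ L, (t.1 ∈ S ∧ t.2.1 ∈ S) ∨ (t.1 ∉ S ∧ t.2.1 ∉ S)) :
    ∑ i ∈ S, p i = 0 :=
  no_cross_subset_balanced_general n p L hsettle S hcross
end

section
/- Let n ≥ 2 and p : Fin n → ℤ with ∑ i, p i = 0. If a list L of transactions settles p and L.length < n − 1, then there exists a subset S ⊆ Fin n with S nonempty, S ≠ Fin n (S is a proper subset), and ∑ i ∈ S, p i = 0. -/
/-!
Draw an undirected edge between the two parties of every transaction. A connected graph on `n`
vertices has at least `n - 1` edges, so fewer than `n - 1` transactions leave the graph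
disconnected. The vertex set `S` of a component is then a nonempty proper subset, and every
transaction lies either inside or outside `S`; hence in `∑ i ∈ S, p i` each transaction touching
`S` is counted once as sent and once as received, and the sum vanishes.
-/

open SimpleGraph

theorem Finset.sum_list_map_filter_eq {α β M : Type*} [DecidableEq β] [AddCommMonoid M]
    (L : List α) (f : α → β) (g : α → M) (S : Finset β) :
    ∑ k ∈ S, ((L.filter (f · = k)).map g).sum = ((L.filter (f · ∈ S)).map g).sum := by
  induction L with
  | nil => simp
  | cons a L ih =>
    have hcons (k : β) : (((a :: L).filter (f · = k)).map g).sum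
        = (if f a = k then g a else 0) + ((L.filter (f · = k)).map g).sum := by
      by_cases h : f a = k <;> simp [h]
    rw [Finset.sum_congr rfl fun k _ => hcons k, Finset.sum_add_distrib, Finset.sum_ite_eq, ih]
    by_cases h : f a ∈ S <;> simp [h]

section

variable {m : ℕ} {L : List (Txn m)}

theorem Settles.sum_eq_zero_of_forall_mem_iff {p : Fin m → ℤ} (h : Settles L p)
    {S : Finset (Fin m)} (hS : ∀ t ∈ L, t.1 ∈ S ↔ t.2.1 ∈ S) : ∑ i ∈ S, p i = 0 := by
  unfold Settles at h
  simp only [← h, Finset.sum_sub_distrib, Finset.sum_list_map_filter_eq,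
    List.filter_congr fun t ht => decide_eq_decide.mpr (hS t ht), sub_self]

variable (L) in
def txnGraph : SimpleGraph (Fin m) :=
  fromEdgeSet ↑(L.map fun t => s(t.1, t.2.1)).toFinset

variable (L) in
theorem natCard_edgeSet_txnGraph_le : Nat.card (txnGraph L).edgeSet ≤ L.length := by
  set F := (L.map fun t => s(t.1, t.2.1)).toFinset
  calc Nat.card (txnGraph L).edgeSet ≤ Nat.card (F : Set (Sym2 (Fin m))) :=
        Nat.card_mono F.finite_toSet (by rw [txnGraph, edgeSet_fromEdgeSet]; exact Set.sdiff_subset)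
    _ = F.card := Nat.card_coe_set_eq _ ▸ Set.ncard_coe_finset F
    _ ≤ L.length := (List.toFinset_card_le _).trans (List.length_map _).le

theorem txnGraph_reachable_of_mem {t : Txn m} (ht : t ∈ L) :
    (txnGraph L).Reachable t.1 t.2.1 := by
  by_cases h : t.1 = t.2.1
  · exact h ▸ Reachable.refl _
  · exact Adj.reachable <| (fromEdgeSet_adj _).mpr
      ⟨Finset.mem_coe.mpr (List.mem_toFinset.mpr (List.mem_map_of_mem ht)), h⟩

theorem not_connected_txnGraph (hlen : L.length < m - 1) : ¬ (txnGraph L).Connected :=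
  fun h => by
    have hvert := h.card_vert_le_card_edgeSet_add_one
    have hedge := natCard_edgeSet_txnGraph_le L
    rw [Nat.card_eq_fintype_card, Fintype.card_fin] at hvert
    omega

end

theorem few_transactions_gives_balanced_subset_general (n : ℕ)
    (p : Fin n → ℤ)
    (L : List (Txn n)) (hsettle : Settles L p)
    (hlen : L.length < n - 1) :
    ∃ S : Finset (Fin n), S.Nonempty ∧ S ≠ Finset.univ ∧ ∑ i ∈ S, p i = 0 := by
  classical
  have : Nonempty (Fin n) := ⟨⟨0, by omega⟩⟩
  obtain ⟨x, y, hxy⟩ : ∃ x y, ¬ (txnGraph L).Reachable x y := by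
    simpa [connected_iff, Preconnected] using not_connected_txnGraph hlen
  refine ⟨Finset.univ.filter ((txnGraph L).Reachable x), ⟨x, by simp⟩,
    fun h => hxy (Finset.mem_filter.mp (Finset.eq_univ_iff_forall.mp h y)).2, ?_⟩
  refine hsettle.sum_eq_zero_of_forall_mem_iff fun t ht => ?_
  have hreach := txnGraph_reachable_of_mem ht
  simp only [Finset.mem_filter, Finset.mem_univ, true_and]
  exact ⟨fun h => h.trans hreach, fun h => h.trans hreach.symm⟩

/-- fewer than `n - 1` transactions force a nonempty proper subset of
participants whose balances sum to zero. -/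
theorem few_transactions_gives_balanced_subset (n : ℕ) (hn : 2 ≤ n)
    (p : Fin n → ℤ) (hsum : ∑ i, p i = 0)
    (L : List (Txn n)) (hvalid : ValidTxns L) (hsettle : Settles L p)
    (hlen : L.length < n - 1) :
    ∃ S : Finset (Fin n), S.Nonempty ∧ S ≠ Finset.univ ∧ ∑ i ∈ S, p i = 0 :=
  few_transactions_gives_balanced_subset_general n p L hsettle hlen
end

section
/- Let n ≥ 2, let B ≥ 1 be an integer, and let p : Fin n → ℤ satisfy ∑ i, p i = 0 and p i < B for all i. Let t 1 be any integer with 1 ≤ t 1 ≤ B, and define recursively for i = 2, …, n: t i = ((p i + t (i−1) − 1) mod B) + 1, where mod denotes the nonnegative remainder. Define the new balance vector p' by p' 1 = p 1 − t 1 + t n and p' i = p i + t (i−1) − t i for 2 ≤ i ≤ n. Then: (a) 1 ≤ t i ≤ B for all i; (b) ∑ i, p' i = 0; (c) B divides p' i for all i; (d) p' i ≤ B for all i; (e) for every i with p i ≥ 0, p' i = 0 or p' i = B. -/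
/-!
Each `t i` is the representative in `[1, B]` of `p i + t (i - 1)` modulo `B`, so every new
balance `p' i = p i + t (i - 1) - t i` with `i ≥ 2` is a multiple of `B`; the transfers
telescope around the cycle, so the new balances still sum to zero, and hence `p' 1` is a
multiple of `B` too. Since `p i < B` and all transfers lie in `[1, B]`, every new balance
is below `2 B`, and above `-B` when `p i ≥ 0`; the only multiples of `B` in these ranges
are `0` and `B`.
-/

open Finset

namespace Int

lemma sub_one_emod_add_one_mem_Icc (x : ℤ) {B : ℤ} (hB : 0 < B) :
    (x - 1) % B + 1 ∈ Set.Icc 1 B :=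
  ⟨by linarith [emod_nonneg (x - 1) hB.ne'], by linarith [emod_lt_of_pos (x - 1) hB]⟩

lemma dvd_sub_sub_one_emod_add_one (x B : ℤ) : B ∣ x - ((x - 1) % B + 1) := by
  rw [show x - ((x - 1) % B + 1) = x - 1 - (x - 1) % B by ring]
  exact dvd_self_sub_emod

lemma le_of_dvd_of_lt_two_mul {B x : ℤ} (hd : B ∣ x) (hx : x < 2 * B) : x ≤ B := by
  by_contra! hBx
  have : x - B = 0 :=
    eq_zero_of_abs_lt_dvd (dvd_sub hd dvd_rfl) (abs_lt.2 ⟨by linarith, by linarith⟩)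
  linarith

lemma eq_zero_or_eq_of_dvd_of_neg_lt_of_lt_two_mul {B x : ℤ} (hd : B ∣ x) (h₁ : -B < x)
    (h₂ : x < 2 * B) : x = 0 ∨ x = B := by
  rcases lt_or_ge x B with hxB | hBx
  · exact .inl (eq_zero_of_abs_lt_dvd hd (abs_lt.2 ⟨h₁, hxB⟩))
  · refine .inr (sub_eq_zero.1 (eq_zero_of_abs_lt_dvd (dvd_sub hd dvd_rfl) ?_))
    exact abs_lt.2 ⟨by linarith, by linarith⟩

end Int

lemma Finset.sum_Ioc_pred_sub {M : Type*} [AddCommGroup M] (f : ℕ → M) {m n : ℕ}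
    (h : m ≤ n) :
    ∑ i ∈ Ioc m n, (f (i - 1) - f i) = f m - f n := by
  induction n, h using Nat.le_induction with
  | base => simp
  | succ n hmn ih =>
    rw [sum_Ioc_succ_top hmn, ih, Nat.add_sub_cancel]
    abel

section CyclicTransfer

variable {M : Type*} [AddCommGroup M] {n : ℕ} {p t p' : ℕ → M}

lemma sum_Icc_eq_of_cyclic_transfer (hn : 1 ≤ n) (hp'1 : p' 1 = p 1 - t 1 + t n)
    (hp'i : ∀ i, 2 ≤ i → i ≤ n → p' i = p i + t (i - 1) - t i) :
    ∑ i ∈ Icc 1 n, p' i = ∑ i ∈ Icc 1 n, p i := by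
  have hsum_tail : ∑ i ∈ Ioc 1 n, p' i = ∑ i ∈ Ioc 1 n, p i + (t 1 - t n) := by
    rw [← sum_Ioc_pred_sub t hn, ← sum_add_distrib]
    refine sum_congr rfl fun i hi => ?_
    rw [hp'i i (mem_Ioc.1 hi).1 (mem_Ioc.1 hi).2]
    abel
  rw [Icc_eq_cons_Ioc hn, sum_cons, sum_cons, hsum_tail, hp'1]
  abel

lemma exists_eq_add_sub_of_cyclic_transfer (hp'1 : p' 1 = p 1 - t 1 + t n)
    (hp'i : ∀ i, 2 ≤ i → i ≤ n → p' i = p i + t (i - 1) - t i) {i : ℕ}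
    (hi : i ∈ Icc 1 n) :
    ∃ j ∈ Icc 1 n, p' i = p i + t j - t i := by
  obtain ⟨hi₁, hin⟩ := mem_Icc.1 hi
  rcases hi₁.eq_or_lt with rfl | hi₂
  · exact ⟨n, right_mem_Icc.2 hin, by rw [hp'1]; abel⟩
  · exact ⟨i - 1, mem_Icc.2 ⟨by omega, by omega⟩, hp'i i hi₂ hin⟩

end CyclicTransfer

lemma transfer_mem_Icc {n : ℕ} {B : ℤ} (hB : 0 < B) {p t : ℕ → ℤ}
    (ht1 : 1 ≤ t 1 ∧ t 1 ≤ B)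
    (htrec : ∀ i, 2 ≤ i → i ≤ n → t i = (p i + t (i - 1) - 1) % B + 1) :
    ∀ i ∈ Icc 1 n, 1 ≤ t i ∧ t i ≤ B := by
  intro i hi
  obtain ⟨hi₁, hin⟩ := mem_Icc.1 hi
  rcases hi₁.eq_or_lt with rfl | hi₂
  · exact ht1
  · rw [htrec i hi₂ hin]
    exact Int.sub_one_emod_add_one_mem_Icc _ hB

/-- correctness of the first round (secure rounding to a multiple of the
bound) of the Conspiracy Santa protocol.  Participants are indexed `1, …, n`, `p i` is
the balance of participant `i`, `t i` is the amount sent by participant `i`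
(`t 1 ∈ [1, B]` arbitrary, then `t i = ((p i + t (i-1) - 1) mod B) + 1`), and `p'` is
the resulting balance vector.  Then every transferred amount lies in `[1, B]`, the new
balances sum to zero, are multiples of `B`, are at most `B`, and every debtor ends at
`0` or `B`. -/
theorem first_round_correct (n : ℕ) (hn : 2 ≤ n) (B : ℤ) (hB : 1 ≤ B)
    (p t p' : ℕ → ℤ)
    (hsum : ∑ i ∈ Finset.Icc 1 n, p i = 0)
    (hlt : ∀ i ∈ Finset.Icc 1 n, p i < B)
    (ht1 : 1 ≤ t 1 ∧ t 1 ≤ B)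
    (htrec : ∀ i, 2 ≤ i → i ≤ n → t i = (p i + t (i - 1) - 1) % B + 1)
    (hp'1 : p' 1 = p 1 - t 1 + t n)
    (hp'i : ∀ i, 2 ≤ i → i ≤ n → p' i = p i + t (i - 1) - t i) :
    (∀ i ∈ Finset.Icc 1 n, 1 ≤ t i ∧ t i ≤ B) ∧
    (∑ i ∈ Finset.Icc 1 n, p' i = 0) ∧
    (∀ i ∈ Finset.Icc 1 n, B ∣ p' i) ∧
    (∀ i ∈ Finset.Icc 1 n, p' i ≤ B) ∧
    (∀ i ∈ Finset.Icc 1 n, 0 ≤ p i → p' i = 0 ∨ p' i = B) := by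
  have hn₁ : 1 ≤ n := by omega
  have ht := transfer_mem_Icc hB ht1 htrec
  have hsum' : ∑ i ∈ Icc 1 n, p' i = 0 :=
    (sum_Icc_eq_of_cyclic_transfer hn₁ hp'1 hp'i).trans hsum
  have hdvd_tail : ∀ i ∈ Ioc 1 n, B ∣ p' i := by
    intro i hi
    obtain ⟨hi₂, hin⟩ := mem_Ioc.1 hi
    rw [hp'i i hi₂ hin, htrec i hi₂ hin]
    exact Int.dvd_sub_sub_one_emod_add_one _ B
  have hdvd : ∀ i ∈ Icc 1 n, B ∣ p' i := by
    intro i hi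
    rcases (mem_Icc.1 hi).1.eq_or_lt with rfl | hi₂
    · rw [Icc_eq_cons_Ioc hn₁, sum_cons] at hsum'
      exact (dvd_add_left (dvd_sum hdvd_tail)).1 (hsum' ▸ dvd_zero B)
    · exact hdvd_tail i (mem_Ioc.2 ⟨hi₂, (mem_Icc.1 hi).2⟩)
  have hlt_two : ∀ i ∈ Icc 1 n, p' i < 2 * B := by
    intro i hi
    obtain ⟨j, hj, hp'j⟩ := exists_eq_add_sub_of_cyclic_transfer hp'1 hp'i hi
    linarith [hlt i hi, (ht i hi).1, (ht j hj).2]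
  refine ⟨ht, hsum', hdvd, fun i hi => Int.le_of_dvd_of_lt_two_mul (hdvd i hi) (hlt_two i hi),
    fun i hi hpi => ?_⟩
  obtain ⟨j, hj, hp'j⟩ := exists_eq_add_sub_of_cyclic_transfer hp'1 hp'i hi
  exact Int.eq_zero_or_eq_of_dvd_of_neg_lt_of_lt_two_mul (hdvd i hi)
    (by linarith [(ht i hi).2, (ht j hj).1]) (hlt_two i hi)
end

section
/- Let n ≥ 2, let B ≥ 1 be an integer, and let p : Fin n → ℤ satisfy ∑ i, p i = 0 and p i < B for all i. Define the extended balance vector q : Fin (n + 1) → ℤ by q i = p i for i < n and q n = 0 (participant n is the piggy bank). Then there exists a list L of transactions on Fin (n + 1) with L.length = 3 · n, each transaction having amount a with 1 ≤ a ≤ B, such that L settles q. -/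
/-!
Each participant `i` first pays its successor on the cycle an amount `t i ∈ (0, B]` congruent
modulo `B` to the prefix sum `p 0 + ⋯ + p i`; since the total is `0` this makes every
remaining debt a multiple of `B`, and as `p i < B` that debt is at most `B`. After every
participant deposits `B` in the piggy bank, each one is owed a nonnegative multiple of `B`,
and these multiples add up to `n`: the bank pays them out in `n` withdrawals of `B`.
-/

def Txn.outflow {m : ℕ} (t : Txn m) : Fin m → ℤ := Pi.single t.1 t.2.2 - Pi.single t.2.1 t.2.2

def netOutflow {m : ℕ} (L : List (Txn m)) : Fin m → ℤ := (L.map Txn.outflow).sum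

section NetOutflow

variable {m : ℕ}

@[simp]
lemma netOutflow_cons (t : Txn m) (L : List (Txn m)) :
    netOutflow (t :: L) = t.outflow + netOutflow L := by
  simp [netOutflow]

@[simp]
lemma netOutflow_append (L L' : List (Txn m)) :
    netOutflow (L ++ L') = netOutflow L + netOutflow L' := by
  simp [netOutflow]

lemma netOutflow_apply (L : List (Txn m)) (k : Fin m) :
    netOutflow L k = ((L.filter (fun t => t.1 = k)).map (fun t => t.2.2)).sum
      - ((L.filter (fun t => t.2.1 = k)).map (fun t => t.2.2)).sum := by
  induction L with
  | nil => rfl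
  | cons t L ih =>
    simp only [netOutflow_cons, Pi.add_apply, ih, Txn.outflow, Pi.sub_apply, Pi.single_apply,
      List.filter_cons]
    split_ifs <;> simp_all <;> ring

lemma settles_iff_netOutflow_eq {L : List (Txn m)} {p : Fin m → ℤ} :
    Settles L p ↔ netOutflow L = p := by
  simp only [Settles, ← netOutflow_apply, funext_iff]

lemma netOutflow_map_finRange {n : ℕ} (f : Fin n → Txn m) :
    netOutflow ((List.finRange n).map f) = ∑ i, (f i).outflow := by
  rw [Fin.sum_univ_def, netOutflow, List.map_map]; rfl

lemma netOutflow_flatMap {α : Type*} (l : List α) (f : α → List (Txn m)) :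
    netOutflow (l.flatMap f) = (l.map fun a => netOutflow (f a)).sum := by
  induction l with
  | nil => rfl
  | cons a l ih => simp [ih]

lemma netOutflow_replicate (c : ℕ) (t : Txn m) :
    netOutflow (List.replicate c t) = c • t.outflow := by
  simp [netOutflow]

end NetOutflow

section Rounds

variable {n : ℕ}

def roundingRound [NeZero n] (t : Fin n → ℤ) : List (Txn (n + 1)) :=
  (List.finRange n).map fun i => (i.castSucc, (i + 1).castSucc, t i)

def depositRound (n : ℕ) (B : ℤ) : List (Txn (n + 1)) :=
  (List.finRange n).map fun i => (i.castSucc, Fin.last n, B)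

def withdrawalRound (B : ℤ) (c : Fin n → ℕ) : List (Txn (n + 1)) :=
  (List.finRange n).flatMap fun i => List.replicate (c i) (Fin.last n, i.castSucc, B)

@[simp]
lemma netOutflow_roundingRound_castSucc [NeZero n] (t : Fin n → ℤ) (k : Fin n) :
    netOutflow (roundingRound t) k.castSucc = t k - t (k - 1) := by
  simp [roundingRound, netOutflow_map_finRange, Txn.outflow, Finset.sum_apply, Pi.single_apply,
    Finset.sum_sub_distrib, ← sub_eq_iff_eq_add]

@[simp]
lemma netOutflow_roundingRound_last [NeZero n] (t : Fin n → ℤ) :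
    netOutflow (roundingRound t) (Fin.last n) = 0 := by
  simp [roundingRound, netOutflow_map_finRange, Txn.outflow, Finset.sum_apply,
    Fin.castSucc_ne_last]

@[simp]
lemma netOutflow_depositRound_castSucc (B : ℤ) (k : Fin n) :
    netOutflow (depositRound n B) k.castSucc = B := by
  simp [depositRound, netOutflow_map_finRange, Txn.outflow, Finset.sum_apply, Pi.single_apply,
    Fin.castSucc_ne_last]

@[simp]
lemma netOutflow_depositRound_last (B : ℤ) :
    netOutflow (depositRound n B) (Fin.last n) = -(n * B) := by
  simp [depositRound, netOutflow_map_finRange, Txn.outflow, Finset.sum_apply,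
    Fin.castSucc_ne_last]

@[simp]
lemma netOutflow_withdrawalRound_castSucc (B : ℤ) (c : Fin n → ℕ) (k : Fin n) :
    netOutflow (withdrawalRound B c) k.castSucc = -(c k * B) := by
  simp [withdrawalRound, netOutflow_flatMap, netOutflow_replicate, ← Fin.sum_univ_def,
    Txn.outflow, Finset.sum_apply, Pi.single_apply, Fin.castSucc_ne_last]

@[simp]
lemma netOutflow_withdrawalRound_last (B : ℤ) (c : Fin n → ℕ) :
    netOutflow (withdrawalRound B c) (Fin.last n) = (∑ i, c i) * B := by
  simp [withdrawalRound, netOutflow_flatMap, netOutflow_replicate, ← Fin.sum_univ_def,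
    Txn.outflow, Finset.sum_apply, Fin.castSucc_ne_last, Finset.sum_mul]

@[simp]
lemma length_roundingRound [NeZero n] (t : Fin n → ℤ) : (roundingRound t).length = n := by
  simp [roundingRound]

@[simp]
lemma length_depositRound (B : ℤ) : (depositRound n B).length = n := by
  simp [depositRound]

@[simp]
lemma length_withdrawalRound (B : ℤ) (c : Fin n → ℕ) :
    (withdrawalRound B c).length = ∑ i, c i := by
  simp [withdrawalRound, Fin.sum_univ_def]

lemma roundingRound_valid [NeZero n] (hn : 1 < n) {B : ℤ} {t : Fin n → ℤ}
    (ht : ∀ i, t i ∈ Set.Ioc 0 B) :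
    ∀ x ∈ roundingRound t, x.1 ≠ x.2.1 ∧ 1 ≤ x.2.2 ∧ x.2.2 ≤ B := by
  simp only [roundingRound, List.mem_map, List.mem_finRange, true_and, forall_exists_index]
  rintro _ i rfl
  exact ⟨by simpa using hn.ne', (ht i).1, (ht i).2⟩

lemma depositRound_valid {B : ℤ} (hB : 1 ≤ B) :
    ∀ x ∈ depositRound n B, x.1 ≠ x.2.1 ∧ 1 ≤ x.2.2 ∧ x.2.2 ≤ B := by
  simp only [depositRound, List.mem_map, List.mem_finRange, true_and, forall_exists_index]
  rintro _ i rfl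
  exact ⟨Fin.castSucc_ne_last i, hB, le_rfl⟩

lemma withdrawalRound_valid {B : ℤ} (hB : 1 ≤ B) (c : Fin n → ℕ) :
    ∀ x ∈ withdrawalRound B c, x.1 ≠ x.2.1 ∧ 1 ≤ x.2.2 ∧ x.2.2 ≤ B := by
  simp only [withdrawalRound, List.mem_flatMap, List.mem_finRange, true_and, forall_exists_index]
  rintro _ i hx
  rw [List.eq_of_mem_replicate hx]
  exact ⟨(Fin.castSucc_ne_last i).symm, hB, le_rfl⟩

end Rounds

lemma exists_sub_sub_one_eq_of_sum_eq_zero {G : Type*} [AddCommGroup G] {n : ℕ} [NeZero n]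
    (p : Fin n → G) (hp : ∑ i, p i = 0) : ∃ S : Fin n → G, ∀ i, S i - S (i - 1) = p i := by
  obtain ⟨n, rfl⟩ := Nat.exists_eq_succ_of_ne_zero (NeZero.ne n)
  refine ⟨fun i => ∑ j, if j ≤ i then p j else 0, fun i => ?_⟩
  rcases eq_or_ne i 0 with rfl | hi
  · simp [Fin.le_def, Fin.coe_neg_one, Fin.is_le, hp]
  · have key : ∀ j, ((if j ≤ i then p j else 0) - if j ≤ i - 1 then p j else 0) =
        if j = i then p j else 0 := by
      intro j
      have := Fin.val_sub_one_of_ne_zero hi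
      have := Fin.val_ne_zero_iff.mpr hi
      simp only [Fin.le_def, Fin.ext_iff] at this ⊢
      split_ifs <;> first | omega | simp
    simp only [← Finset.sum_sub_distrib, key, Finset.sum_ite_eq', Finset.mem_univ, if_true]

theorem exists_cycle_rounding {n : ℕ} [NeZero n] {B : ℤ} (hB : 0 < B) {p : Fin n → ℤ}
    (hp : ∑ i, p i = 0) :
    ∃ t : Fin n → ℤ, (∀ i, t i ∈ Set.Ioc 0 B) ∧
      ∃ m : Fin n → ℤ, ∑ i, m i = 0 ∧ ∀ i, p i + t (i - 1) - t i = m i * B := by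
  obtain ⟨S, hS⟩ := exists_sub_sub_one_eq_of_sum_eq_zero p hp
  set d := fun i => toIocDiv hB 0 (S i)
  refine ⟨fun i => toIocMod hB 0 (S i), fun i => by simpa using toIocMod_mem_Ioc hB 0 (S i),
    fun i => d i - d (i - 1), ?_, fun i => ?_⟩
  · rw [Finset.sum_sub_distrib,
      Fintype.sum_equiv (Equiv.subRight 1) (fun i => d (i - 1)) d fun _ => rfl, sub_self]
  · have h : ∀ b, b - toIocMod hB 0 b = toIocDiv hB 0 b * B := fun b => by
      rw [self_sub_toIocMod, smul_eq_mul]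
    linear_combination -hS i + h (S i) - h (S (i - 1))

section ThreeRounds

variable {n : ℕ} [NeZero n]

def threeRounds (t : Fin n → ℤ) (B : ℤ) (c : Fin n → ℕ) : List (Txn (n + 1)) :=
  roundingRound t ++ depositRound n B ++ withdrawalRound B c

lemma length_threeRounds (t : Fin n → ℤ) (B : ℤ) (c : Fin n → ℕ) :
    (threeRounds t B c).length = n + n + ∑ i, c i := by
  simp only [threeRounds, List.length_append, length_roundingRound, length_depositRound,
    length_withdrawalRound]

lemma threeRounds_valid (hn : 1 < n) {B : ℤ} (hB : 1 ≤ B) {t : Fin n → ℤ}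
    (ht : ∀ i, t i ∈ Set.Ioc 0 B) (c : Fin n → ℕ) :
    ∀ x ∈ threeRounds t B c, x.1 ≠ x.2.1 ∧ 1 ≤ x.2.2 ∧ x.2.2 ≤ B := by
  simp only [threeRounds, List.mem_append]
  rintro x ((hx | hx) | hx)
  · exact roundingRound_valid hn ht x hx
  · exact depositRound_valid hB x hx
  · exact withdrawalRound_valid hB c x hx

theorem settles_threeRounds {B : ℤ} {p t : Fin n → ℤ} {c : Fin n → ℕ}
    (hc : ∑ i, c i = n) (hp : ∀ k, t k - t (k - 1) + B - c k * B = p k) :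
    Settles (threeRounds t B c) (fun i => if h : (i : ℕ) < n then p ⟨i, h⟩ else 0) := by
  rw [settles_iff_netOutflow_eq, threeRounds]
  funext i
  induction i using Fin.lastCases with
  | last => simp [hc]
  | cast k => simpa [← sub_eq_add_neg, add_sub_assoc] using hp k

theorem exists_rounding_and_withdrawal_counts {B : ℤ} (hB : 0 < B) {p : Fin n → ℤ}
    (hsum : ∑ i, p i = 0) (hlt : ∀ i, p i < B) :
    ∃ t : Fin n → ℤ, (∀ i, t i ∈ Set.Ioc 0 B) ∧ ∃ c : Fin n → ℕ,
      ∑ i, c i = n ∧ ∀ k, t k - t (k - 1) + B - c k * B = p k := by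
  obtain ⟨t, ht, m, hm_sum, hm⟩ := exists_cycle_rounding hB hsum
  have hm_le : ∀ i, m i ≤ 1 := fun i => by
    have : m i * B < 2 * B := by linarith [hm i, hlt i, (ht (i - 1)).2, (ht i).1]
    exact Int.lt_add_one_iff.mp (lt_of_mul_lt_mul_right this hB.le)
  have hc : ∀ i, ((1 - m i).toNat : ℤ) = 1 - m i :=
    fun i => Int.toNat_of_nonneg (by linarith [hm_le i])
  refine ⟨t, ht, fun i => (1 - m i).toNat, ?_, fun k => ?_⟩
  · zify
    simp [hc, Finset.sum_sub_distrib, hm_sum]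
  · rw [hc]
    linarith [hm k]

end ThreeRounds

/-- correctness and transaction count of the three-round Conspiracy Santa
protocol.  With `n` participants with balances `p i < B` summing to zero, plus a piggy
bank (participant `n`, balance `0`), there is a settling list of exactly `3 · n`
transactions, each of amount between `1` and `B`. -/
theorem conspiracy_santa_three_n (n : ℕ) (hn : 2 ≤ n) (B : ℤ) (hB : 1 ≤ B)
    (p : Fin n → ℤ) (hsum : ∑ i, p i = 0) (hlt : ∀ i, p i < B) :
    ∃ L : List (Txn (n + 1)),
      L.length = 3 * n ∧
      (∀ t ∈ L, t.1 ≠ t.2.1 ∧ 1 ≤ t.2.2 ∧ t.2.2 ≤ B) ∧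
      Settles L (fun i => if h : (i : ℕ) < n then p ⟨i, h⟩ else 0) := by
  have : NeZero n := ⟨by omega⟩
  obtain ⟨t, ht, c, hc, hbalance⟩ := exists_rounding_and_withdrawal_counts (by omega) hsum hlt
  refine ⟨threeRounds t B c, ?_, threeRounds_valid (by omega) hB ht c,
    settles_threeRounds hc hbalance⟩
  rw [length_threeRounds, hc]
  ring
end

section
/- Let n ≥ 2, let B ≥ 1 be an integer, and let p : Fin n → ℤ satisfy ∑ i, p i = 0 and p i < B for all i. Let t 1 be any integer with 0 ≤ t 1 ≤ B − 1, set s 1 = 1 + t 1, and define recursively for i = 2, …, n: s i = 1 + ((p i + s (i−1) − 1) mod B) + (i − 1) · B, where mod denotes the nonnegative remainder. Define the new balance vector q by q i = p i + s (i−1) − s i for 2 ≤ i ≤ n and q 1 = p 1 − s 1 + s n − n · B. Then: (a) (i − 1) · B + 1 ≤ s i ≤ i · B for all i (in particular s (i−1) < s i, so every participant sends more than they received); (b) B divides q i for all i; (c) q i ≤ 0 for all i; (d) ∑ i, q i = −n · B. -/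
/-!
Each amount `s i = 1 + (x mod B) + (i - 1) B` lies in the `i`-th block `[(i - 1) B + 1, i B]`,
and `s i ≡ x + 1 = p i + s (i - 1)` modulo `B`, so every participant `i ≥ 2` ends with a multiple
of `B`. The transfers cancel in the total, which is therefore `∑ p - n B = -n B`, so the balance of
participant `1` is a multiple of `B` as well. Finally every new balance is `< B`: the amount
received lies in a lower block than the amount sent (for participant `1`, the amount `s n ≤ n B`
received is offset by the `n B` paid to the piggy bank); a multiple of `B` below `B` is `≤ 0`.
-/

open Finset

theorem Finset.sum_Ioc_sub_pred {G : Type*} [AddCommGroup G] (f : ℕ → G) {m n : ℕ}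
    (hmn : m ≤ n) : ∑ i ∈ Ioc m n, (f (i - 1) - f i) = f m - f n := by
  induction n, hmn using Nat.le_induction with
  | base => simp
  | succ n hmn ih => rw [sum_Ioc_succ_top hmn, ih, Nat.add_sub_cancel]; abel

theorem Int.nonpos_of_dvd_of_lt {a b : ℤ} (h : b ∣ a) (hab : a < b) : a ≤ 0 := by
  by_contra! ha
  exact (Int.le_of_dvd ha h).not_gt hab

namespace ConspiracySanta

theorem one_add_emod_add_mul_mem_block {B : ℤ} (hB : 0 < B) (x k : ℤ) :
    k * B + 1 ≤ 1 + x % B + k * B ∧ 1 + x % B + k * B ≤ (k + 1) * B := by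
  have := Int.emod_nonneg x hB.ne'
  have := Int.emod_lt_of_pos x hB
  constructor <;> linarith

theorem dvd_add_one_sub_one_add_emod_add_mul (x k B : ℤ) :
    B ∣ x + 1 - (1 + x % B + k * B) :=
  ⟨x / B - k, by rw [Int.emod_def]; ring⟩

theorem sum_balances_after_cyclic_transfer {n : ℕ} (hn : 1 ≤ n) {c : ℤ} {p s q : ℕ → ℤ}
    (hq1 : q 1 = p 1 - s 1 + s n - c)
    (hqi : ∀ i, 2 ≤ i → i ≤ n → q i = p i + s (i - 1) - s i) :
    ∑ i ∈ Icc 1 n, q i = ∑ i ∈ Icc 1 n, p i - c := by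
  have htail : ∑ i ∈ Ioc 1 n, q i = ∑ i ∈ Ioc 1 n, p i + (s 1 - s n) := by
    rw [← sum_Ioc_sub_pred s hn, ← sum_add_distrib]
    refine sum_congr rfl fun i hi => ?_
    obtain ⟨h1, hin⟩ := mem_Ioc.1 hi
    rw [hqi i h1 hin]
    ring
  rw [Icc_eq_cons_Ioc hn, sum_cons, sum_cons, htail, hq1]
  ring

theorem sent_mem_block {n : ℕ} {B : ℤ} (hB : 0 < B) {p s : ℕ → ℤ} {t1 : ℤ}
    (ht1 : 0 ≤ t1 ∧ t1 ≤ B - 1) (hs1 : s 1 = 1 + t1)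
    (hsrec : ∀ i, 2 ≤ i → i ≤ n →
      s i = 1 + (p i + s (i - 1) - 1) % B + ((i : ℤ) - 1) * B) :
    ∀ i ∈ Icc 1 n, ((i : ℤ) - 1) * B + 1 ≤ s i ∧ s i ≤ (i : ℤ) * B := by
  intro i hi
  obtain ⟨h1, hin⟩ := mem_Icc.1 hi
  rcases h1.eq_or_lt with rfl | h2
  · rw [hs1]
    constructor <;> push_cast <;> linarith
  · rw [hsrec i h2 hin]
    simpa using one_add_emod_add_mul_mem_block hB (p i + s (i - 1) - 1) ((i : ℤ) - 1)

theorem new_balance_lt {n : ℕ} {B : ℤ} {p s q : ℕ → ℤ}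
    (hlt : ∀ i ∈ Icc 1 n, p i < B)
    (hsent : ∀ i ∈ Icc 1 n, ((i : ℤ) - 1) * B + 1 ≤ s i ∧ s i ≤ (i : ℤ) * B)
    (hq1 : q 1 = p 1 - s 1 + s n - (n : ℤ) * B)
    (hqi : ∀ i, 2 ≤ i → i ≤ n → q i = p i + s (i - 1) - s i) :
    ∀ i ∈ Icc 1 n, q i < B := by
  intro i hi
  have hpi := hlt i hi
  obtain ⟨h1, hin⟩ := mem_Icc.1 hi
  rcases h1.eq_or_lt with rfl | h2
  · have hs1 := (hsent 1 hi).1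
    have hsn := (hsent n (mem_Icc.2 ⟨hin, le_rfl⟩)).2
    rw [hq1]
    push_cast at hs1
    linarith
  · have hsi := (hsent i hi).1
    have hprev := (hsent (i - 1) (mem_Icc.2 ⟨by omega, by omega⟩)).2
    rw [Nat.cast_sub h2.le, Nat.cast_one] at hprev
    rw [hqi i h2 hin]
    linarith

end ConspiracySanta

open ConspiracySanta in
/-- correctness of the merged round (Protocol 4) of the faster Conspiracy
Santa protocol.  Participants are indexed `1, …, n`, `p i` is the balance of
participant `i`, `s i` is the amount sent by participant `i`
(`s 1 = 1 + t1` with `t1 ∈ [0, B-1]`, then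
`s i = 1 + ((p i + s (i-1) - 1) mod B) + (i - 1) · B`), and `q` is the resulting
balance vector, where participant 1 additionally pays `n · B` to the piggy bank.
Then `(i - 1) · B + 1 ≤ s i ≤ i · B` for all `i`, every new balance is a nonpositive
multiple of `B`, and the new balances sum to `-n · B`. -/
theorem merged_round_correct (n : ℕ) (hn : 2 ≤ n) (B : ℤ) (hB : 1 ≤ B)
    (p s q : ℕ → ℤ) (t1 : ℤ)
    (hsum : ∑ i ∈ Finset.Icc 1 n, p i = 0)
    (hlt : ∀ i ∈ Finset.Icc 1 n, p i < B)
    (ht1 : 0 ≤ t1 ∧ t1 ≤ B - 1)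
    (hs1 : s 1 = 1 + t1)
    (hsrec : ∀ i, 2 ≤ i → i ≤ n →
      s i = 1 + (p i + s (i - 1) - 1) % B + ((i : ℤ) - 1) * B)
    (hq1 : q 1 = p 1 - s 1 + s n - (n : ℤ) * B)
    (hqi : ∀ i, 2 ≤ i → i ≤ n → q i = p i + s (i - 1) - s i) :
    (∀ i ∈ Finset.Icc 1 n, ((i : ℤ) - 1) * B + 1 ≤ s i ∧ s i ≤ (i : ℤ) * B) ∧
    (∀ i ∈ Finset.Icc 1 n, B ∣ q i) ∧
    (∀ i ∈ Finset.Icc 1 n, q i ≤ 0) ∧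
    (∑ i ∈ Finset.Icc 1 n, q i = -(n : ℤ) * B) := by
  have hn1 : 1 ≤ n := by omega
  have hsent := sent_mem_block (by omega) ht1 hs1 hsrec
  have htotal : ∑ i ∈ Icc 1 n, q i = -(n : ℤ) * B := by
    rw [sum_balances_after_cyclic_transfer hn1 hq1 hqi, hsum, zero_sub, neg_mul]
  have hdvd_tail : ∀ i ∈ Ioc 1 n, B ∣ q i := fun i hi => by
    obtain ⟨h1, hin⟩ := mem_Ioc.1 hi
    rw [hqi i h1 hin, hsrec i h1 hin]
    simpa [add_sub_cancel_right] using
      dvd_add_one_sub_one_add_emod_add_mul (p i + s (i - 1) - 1) ((i : ℤ) - 1) B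
  have hdvd : ∀ i ∈ Icc 1 n, B ∣ q i := by
    have hdvd_total : B ∣ ∑ i ∈ Icc 1 n, q i := htotal ▸ dvd_mul_left B _
    rw [Icc_eq_cons_Ioc hn1, sum_cons, dvd_add_left (dvd_sum hdvd_tail)] at hdvd_total
    rw [Icc_eq_cons_Ioc hn1]
    simpa only [mem_cons, forall_eq_or_imp] using ⟨hdvd_total, hdvd_tail⟩
  have hqlt := new_balance_lt hlt hsent hq1 hqi
  exact ⟨hsent, hdvd, fun i hi => Int.nonpos_of_dvd_of_lt (hdvd i hi) (hqlt i hi), htotal⟩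
end
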